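/- Let β > 0 and let k be a positive integer. For every ζ in the strip S_β the quotient (ζ²+β²)/(ζ²+2β²) lies in ℂ ∖ (−∞,0], so the function g(ζ) = ((ζ²+β²)/(ζ²+2β²))^{k−1/2}, defined using the principal branch power, is well defined, holomorphic and even on S_β. Moreover, for every nonnegative integer J ≤ k−1 there exists a constant C = C(β,k,J) such that |g^{(j)}(ζ)| ≤ C (1+|ζ|)^{−j} for all ζ ∈ S_β and all j ∈ {0, 1, …, J}; that is, g ∈ H^∞(S_β;J). (This is the multiplier estimate for the operator 𝓛^{k−1/2}(β²I+𝓛)^{1/2−k} with b = β², used in the proof of the Riesz transform theorem, Theorem 4.5 of the paper.) -/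

import Mathlib

/-!
On the strip `|Im ζ| < β` the denominator `D(ζ) = ζ² + 2β²` has real part at least
`(Re ζ)² + β²`, so it does not vanish and `|D(ζ)| ≳ (1 + |ζ|)²`; the quotient
`q = (ζ² + β²)/D` has positive real part and `|q| ≤ 2`. Differentiating `q^α` by the chain and
quotient rules gives `g⁽ʲ⁾ = q^{α-j} pⱼ / D^{2j}` with polynomials `pⱼ` of degree at most `3j`.
For `j ≤ α` the factor `q^{α-j}` is bounded by `2^{α-j}`, and `pⱼ / D^{2j}` by
`C (1 + |ζ|)^{3j-4j}`.
-/

noncomputable section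

/-- The multiplier `g(ζ) = ((ζ²+β²)/(ζ²+2β²))^{k-1/2}`, with the principal branch power. -/
def gFun (β : ℝ) (k : ℕ) : ℂ → ℂ := fun ζ =>
  ((ζ ^ 2 + (β : ℂ) ^ 2) / (ζ ^ 2 + 2 * (β : ℂ) ^ 2)) ^ ((k : ℂ) - 1 / 2)

open Complex Polynomial Filter

namespace StripMultiplier

def den (β : ℝ) (ζ : ℂ) : ℂ := ζ ^ 2 + 2 * (β : ℂ) ^ 2

def ratio (β : ℝ) (ζ : ℂ) : ℂ := (ζ ^ 2 + (β : ℂ) ^ 2) / den β ζ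

variable {β : ℝ} {ζ : ℂ}

lemma pos_of_abs_im_lt (h : |ζ.im| < β) : 0 < β := (abs_nonneg _).trans_lt h

lemma isOpen_strip (β : ℝ) : IsOpen {z : ℂ | |z.im| < β} :=
  isOpen_lt (continuous_abs.comp continuous_im) continuous_const

lemma sq_add_sq_le_re_den (h : |ζ.im| < β) : ζ.re ^ 2 + β ^ 2 ≤ (den β ζ).re := by
  have him := abs_lt.mp h
  have hre : (den β ζ).re = ζ.re ^ 2 - ζ.im ^ 2 + 2 * β ^ 2 := by
    simp [den, pow_two]
  nlinarith

lemma sq_add_sq_le_norm_den (h : |ζ.im| < β) : ζ.re ^ 2 + β ^ 2 ≤ ‖den β ζ‖ :=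
  (sq_add_sq_le_re_den h).trans (re_le_norm _)

lemma sq_le_norm_den (h : |ζ.im| < β) : β ^ 2 ≤ ‖den β ζ‖ :=
  le_of_add_le_of_nonneg_right (sq_add_sq_le_norm_den h) (sq_nonneg _)

lemma den_ne_zero (h : |ζ.im| < β) : den β ζ ≠ 0 := by
  have := (pow_pos (pos_of_abs_im_lt h) 2).trans_le (sq_le_norm_den h)
  exact norm_pos_iff.mp this

lemma one_add_norm_sq_le_norm_den (h : |ζ.im| < β) :
    min (β ^ 2) 1 / 4 * (1 + ‖ζ‖) ^ 2 ≤ ‖den β ζ‖ := by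
  have hnorm : ‖ζ‖ ^ 2 = ζ.re ^ 2 + ζ.im ^ 2 := by
    rw [Complex.sq_norm, normSq_apply]; ring
  have him := abs_lt.mp h
  have hmin : 0 < min (β ^ 2) 1 := lt_min (pow_pos (pos_of_abs_im_lt h) 2) one_pos
  nlinarith [sq_add_sq_le_norm_den h, sq_nonneg (1 - ‖ζ‖), norm_nonneg ζ, min_le_left (β ^ 2) 1,
    min_le_right (β ^ 2) 1]

lemma ratio_re_pos (h : |ζ.im| < β) : 0 < (ratio β ζ).re := by
  have him := abs_lt.mp h
  rw [ratio, div_re, ← add_div]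
  refine div_pos ?_ (normSq_pos.mpr (den_ne_zero h))
  simp only [den, pow_two, add_re, add_im, mul_re, mul_im, ofReal_re, ofReal_im, re_ofNat,
    im_ofNat]
  have hy : ζ.im * ζ.im < β * β := by nlinarith
  have h1 : 0 < ζ.re * ζ.re - ζ.im * ζ.im + β * β := by nlinarith [mul_self_nonneg ζ.re]
  have h2 : 0 < ζ.re * ζ.re - ζ.im * ζ.im + 2 * (β * β) := by nlinarith
  nlinarith [mul_pos h1 h2, mul_self_nonneg (ζ.re * ζ.im)]

lemma ratio_mem_slitPlane (h : |ζ.im| < β) : ratio β ζ ∈ slitPlane :=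
  Or.inl (ratio_re_pos h)

lemma norm_ratio_le_two (h : |ζ.im| < β) : ‖ratio β ζ‖ ≤ 2 := by
  have hD := sq_le_norm_den h
  have hβ := pos_of_abs_im_lt h
  have hnum : ‖ζ ^ 2 + (β : ℂ) ^ 2‖ ≤ ‖den β ζ‖ + β ^ 2 := by
    calc ‖ζ ^ 2 + (β : ℂ) ^ 2‖ = ‖den β ζ - (β : ℂ) ^ 2‖ := by rw [den]; ring_nf
      _ ≤ ‖den β ζ‖ + ‖(β : ℂ) ^ 2‖ := norm_sub_le _ _
      _ = ‖den β ζ‖ + β ^ 2 := by rw [norm_pow, norm_real, Real.norm_of_nonneg hβ.le]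
  rw [ratio, norm_div, div_le_iff₀ (by positivity [den_ne_zero h])]
  linarith

lemma hasDerivAt_den (β : ℝ) (ζ : ℂ) : HasDerivAt (den β) (2 * ζ) ζ := by
  unfold den
  simpa using (hasDerivAt_pow 2 ζ).add_const (2 * (β : ℂ) ^ 2)

lemma hasDerivAt_ratio (h : |ζ.im| < β) :
    HasDerivAt (ratio β) ((β : ℂ) ^ 2 * (2 * ζ) / den β ζ ^ 2) ζ := by
  have hnum : HasDerivAt (fun z : ℂ => z ^ 2 + (β : ℂ) ^ 2) (2 * ζ) ζ := by
    simpa using (hasDerivAt_pow 2 ζ).add_const ((β : ℂ) ^ 2)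
  refine (hnum.div (hasDerivAt_den β ζ) (den_ne_zero h)).congr_deriv ?_
  rw [den]; ring

lemma differentiableOn_ratio_cpow (α : ℂ) :
    DifferentiableOn ℂ (fun z => ratio β z ^ α) {z : ℂ | |z.im| < β} := fun _ h =>
  ((hasDerivAt_ratio h).cpow_const (ratio_mem_slitPlane h)).differentiableAt.differentiableWithinAt

lemma norm_eval_le_mul_one_add_norm_pow {𝕜 : Type*} [NormedField 𝕜] (p : 𝕜[X]) {n : ℕ}
    (hp : p.natDegree ≤ n) : ∃ C, ∀ z : 𝕜, ‖p.eval z‖ ≤ C * (1 + ‖z‖) ^ n := by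
  refine ⟨∑ i ∈ Finset.range (p.natDegree + 1), ‖p.coeff i‖, fun z => ?_⟩
  have hz : 1 ≤ 1 + ‖z‖ := le_add_of_nonneg_right (norm_nonneg z)
  rw [eval_eq_sum_range, Finset.sum_mul]
  refine (norm_sum_le _ _).trans (Finset.sum_le_sum fun i hi => ?_)
  rw [norm_mul, norm_pow]
  refine mul_le_mul_of_nonneg_left ?_ (norm_nonneg _)
  calc ‖z‖ ^ i ≤ (1 + ‖z‖) ^ i := by gcongr; exact le_add_of_nonneg_left zero_le_one
    _ ≤ (1 + ‖z‖) ^ n := pow_le_pow_right₀ hz (by have := Finset.mem_range.mp hi; omega)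

lemma natDegree_mul_derivative_le {R : Type*} [Semiring R] {p q : R[X]} {m n : ℕ}
    (hq : q.natDegree ≤ m) (hp : p.natDegree ≤ n) :
    (q * derivative p).natDegree ≤ m + n - 1 := by
  rcases Nat.eq_zero_or_pos p.natDegree with h0 | hpos
  · simp [derivative_of_natDegree_zero h0]
  · exact natDegree_mul_le.trans (by have := natDegree_derivative_le p; omega)

def coeffPoly (β : ℝ) (α : ℂ) : ℕ → ℂ[X]
  | 0 => 1
  | j + 1 =>
      C (2 * (β : ℂ) ^ 2 * (α - j)) * X * coeffPoly β α j +
        (X ^ 2 + C ((β : ℂ) ^ 2)) *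
          ((X ^ 2 + C (2 * (β : ℂ) ^ 2)) * derivative (coeffPoly β α j) -
            C (4 * (j : ℂ)) * X * coeffPoly β α j)

lemma natDegree_coeffPoly_le (β : ℝ) (α : ℂ) (j : ℕ) : (coeffPoly β α j).natDegree ≤ 3 * j := by
  induction j with
  | zero => simp [coeffPoly]
  | succ j ih =>
    have hquad (a : ℂ) : (X ^ 2 + C a).natDegree ≤ 2 := by compute_degree
    have hXp (a : ℂ) : (C a * X * coeffPoly β α j).natDegree ≤ 3 * j + 1 :=
      (natDegree_mul_le_of_le (by compute_degree) ih).trans (by omega)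
    rw [coeffPoly]
    refine natDegree_add_le_of_degree_le ((hXp _).trans (by omega)) ?_
    refine (natDegree_mul_le_of_le (hquad _)
      (natDegree_sub_le_of_le (m := 3 * j + 1) ?_ (hXp _))).trans (by omega)
    exact (natDegree_mul_derivative_le (hquad _) ih).trans (by omega)

lemma hasDerivAt_eval_div_den_pow (p : ℂ[X]) (n : ℕ) (h : |ζ.im| < β) :
    HasDerivAt (fun z => p.eval z / den β z ^ n)
      (((derivative p).eval ζ * den β ζ - n * (2 * ζ) * p.eval ζ) / den β ζ ^ (n + 1)) ζ := by
  have hD := den_ne_zero h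
  refine ((p.hasDerivAt ζ).div ((hasDerivAt_den β ζ).pow n) (pow_ne_zero n hD)).congr_deriv ?_
  simp only [Pi.pow_apply]
  rcases n with _ | n
  · simp [hD]
  · simp only [Nat.add_sub_cancel]
    field_simp
    ring

lemma hasDerivAt_ratio_cpow_mul (α : ℂ) (j : ℕ) (h : |ζ.im| < β) :
    HasDerivAt (fun z => ratio β z ^ (α - j) * ((coeffPoly β α j).eval z / den β z ^ (2 * j)))
      (ratio β ζ ^ (α - (j + 1 : ℕ)) *
        ((coeffPoly β α (j + 1)).eval ζ / den β ζ ^ (2 * (j + 1)))) ζ := by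
  have hD := den_ne_zero h
  have hq := slitPlane_ne_zero (ratio_mem_slitPlane h)
  have hpow : ratio β ζ ^ (α - j) = ratio β ζ ^ (α - (j + 1 : ℕ)) * ratio β ζ := by
    rw [show α - ((j + 1 : ℕ) : ℂ) = α - j - 1 by push_cast; ring, cpow_sub _ 1 hq,
      cpow_one, div_mul_cancel₀ _ hq]
  refine (((hasDerivAt_ratio h).cpow_const (ratio_mem_slitPlane h)).mul
    (hasDerivAt_eval_div_den_pow (coeffPoly β α j) (2 * j) h)).congr_deriv ?_
  rw [hpow, show α - j - 1 = α - (j + 1 : ℕ) by push_cast; ring]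
  simp only [coeffPoly, eval_add, eval_mul, eval_sub, eval_C, eval_X, eval_pow]
  rw [ratio] at *
  field_simp
  rw [den]
  push_cast
  ring

lemma iteratedDeriv_ratio_cpow (α : ℂ) (j : ℕ) (h : |ζ.im| < β) :
    iteratedDeriv j (fun z => ratio β z ^ α) ζ =
      ratio β ζ ^ (α - j) * ((coeffPoly β α j).eval ζ / den β ζ ^ (2 * j)) := by
  induction j generalizing ζ with
  | zero => simp [coeffPoly]
  | succ j ih =>
    have heq : iteratedDeriv j (fun z => ratio β z ^ α) =ᶠ[nhds ζ]
        fun z => ratio β z ^ (α - j) * ((coeffPoly β α j).eval z / den β z ^ (2 * j)) :=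
      eventually_of_mem ((isOpen_strip β).mem_nhds h) fun z hz => ih hz
    rw [iteratedDeriv_succ, heq.deriv_eq, (hasDerivAt_ratio_cpow_mul α j h).deriv]

lemma norm_iteratedDeriv_ratio_cpow_le (α : ℝ) (j : ℕ) (hj : (j : ℝ) ≤ α) :
    ∃ C, ∀ ζ : ℂ, |ζ.im| < β →
      ‖iteratedDeriv j (fun z => ratio β z ^ (α : ℂ)) ζ‖ ≤ C / (1 + ‖ζ‖) ^ j := by
  obtain ⟨A, hA⟩ := norm_eval_le_mul_one_add_norm_pow _ (natDegree_coeffPoly_le β α j)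
  set c := min (β ^ 2) 1 / 4
  refine ⟨2 ^ (α - j) * A / c ^ (2 * j), fun ζ h => ?_⟩
  have hc : 0 < c := by have := pos_of_abs_im_lt h; positivity
  have hpow : ‖ratio β ζ ^ ((α : ℂ) - j)‖ ≤ 2 ^ (α - j) := by
    rw [show (α : ℂ) - j = ((α - j : ℝ) : ℂ) by push_cast; ring, norm_cpow_real]
    exact Real.rpow_le_rpow (norm_nonneg _) (norm_ratio_le_two h) (by linarith)
  have hden : (c * (1 + ‖ζ‖) ^ 2) ^ (2 * j) ≤ ‖den β ζ‖ ^ (2 * j) :=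
    pow_le_pow_left₀ (by positivity) (one_add_norm_sq_le_norm_den h) _
  have hA₀ : 0 ≤ A * (1 + ‖ζ‖) ^ (3 * j) := (norm_nonneg _).trans (hA ζ)
  rw [iteratedDeriv_ratio_cpow _ _ h, norm_mul, norm_div, norm_pow]
  calc _ ≤ 2 ^ (α - j) * (A * (1 + ‖ζ‖) ^ (3 * j) / (c * (1 + ‖ζ‖) ^ 2) ^ (2 * j)) :=
        mul_le_mul hpow (div_le_div₀ hA₀ (hA ζ) (by positivity) hden) (by positivity)
          (by positivity)
    _ = 2 ^ (α - j) * A / c ^ (2 * j) / (1 + ‖ζ‖) ^ j := by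
        rw [mul_pow, ← pow_mul, show 2 * (2 * j) = 3 * j + j by ring, pow_add]
        field_simp

lemma exists_bound_iteratedDeriv_ratio_cpow (α : ℝ) (J : ℕ) (hJ : (J : ℝ) ≤ α) :
    ∃ C, ∀ ζ : ℂ, |ζ.im| < β → ∀ j ≤ J,
      ‖iteratedDeriv j (fun z => ratio β z ^ (α : ℂ)) ζ‖ ≤ C / (1 + ‖ζ‖) ^ j := by
  have hbound : ∀ j ∈ Finset.range (J + 1), ∀ᶠ C in atTop, ∀ ζ : ℂ, |ζ.im| < β →
      ‖iteratedDeriv j (fun z => ratio β z ^ (α : ℂ)) ζ‖ ≤ C / (1 + ‖ζ‖) ^ j := by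
    intro j hj
    have hjα : (j : ℝ) ≤ α := le_trans (by exact_mod_cast Finset.mem_range_succ_iff.mp hj) hJ
    obtain ⟨C₀, hC₀⟩ := norm_iteratedDeriv_ratio_cpow_le α j hjα
    filter_upwards [eventually_ge_atTop C₀] with C hC ζ hζ
    exact (hC₀ ζ hζ).trans (by gcongr)
  obtain ⟨C, hC⟩ := ((eventually_all_finset _).2 hbound).exists
  exact ⟨C, fun ζ hζ j hj => hC j (Finset.mem_range_succ_iff.mpr hj) ζ hζ⟩

end StripMultiplier

open StripMultiplier in
theorem stmt7_general (β : ℝ) (k : ℕ) (hk : 0 < k) :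
    -- the quotient lies in `ℂ ∖ (-∞, 0]` on the strip `S_β`
    (∀ ζ : ℂ, |ζ.im| < β →
      (ζ ^ 2 + (β : ℂ) ^ 2) / (ζ ^ 2 + 2 * (β : ℂ) ^ 2) ∈ Complex.slitPlane) ∧
    -- `g` is holomorphic on `S_β`
    DifferentiableOn ℂ (gFun β k) {ζ : ℂ | |ζ.im| < β} ∧
    -- `g` is even on `S_β`
    (∀ ζ : ℂ, |ζ.im| < β → gFun β k (-ζ) = gFun β k ζ) ∧
    -- for every `J ≤ k-1` there is `C = C(β,k,J)` with `|g⁽ʲ⁾(ζ)| ≤ C (1+|ζ|)^{-j}` on `S_β`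
    ∀ J : ℕ, J ≤ k - 1 → ∃ C : ℝ, ∀ ζ : ℂ, |ζ.im| < β → ∀ j : ℕ, j ≤ J →
      ‖iteratedDeriv j (gFun β k) ζ‖ ≤ C / (1 + ‖ζ‖) ^ j := by
  have hg : gFun β k = fun z => ratio β z ^ ((k - 1 / 2 : ℝ) : ℂ) := by
    ext z
    simp [gFun, ratio, den]
  refine ⟨fun ζ h => ratio_mem_slitPlane h, hg ▸ differentiableOn_ratio_cpow _,
    fun ζ _ => by simp only [gFun, neg_sq], fun J hJ => ?_⟩
  have hJk : ((J + 1 : ℕ) : ℝ) ≤ k := by exact_mod_cast (by omega : J + 1 ≤ k)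
  rw [hg]
  exact exists_bound_iteratedDeriv_ratio_cpow _ J (by push_cast at hJk; linarith)

theorem stmt7 (β : ℝ) (hβ : 0 < β) (k : ℕ) (hk : 0 < k) :
    -- the quotient lies in `ℂ ∖ (-∞, 0]` on the strip `S_β`
    (∀ ζ : ℂ, |ζ.im| < β →
      (ζ ^ 2 + (β : ℂ) ^ 2) / (ζ ^ 2 + 2 * (β : ℂ) ^ 2) ∈ Complex.slitPlane) ∧
    -- `g` is holomorphic on `S_β`
    DifferentiableOn ℂ (gFun β k) {ζ : ℂ | |ζ.im| < β} ∧
    -- `g` is even on `S_β`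
    (∀ ζ : ℂ, |ζ.im| < β → gFun β k (-ζ) = gFun β k ζ) ∧
    -- for every `J ≤ k-1` there is `C = C(β,k,J)` with `|g⁽ʲ⁾(ζ)| ≤ C (1+|ζ|)^{-j}` on `S_β`
    ∀ J : ℕ, J ≤ k - 1 → ∃ C : ℝ, ∀ ζ : ℂ, |ζ.im| < β → ∀ j : ℕ, j ≤ J →
      ‖iteratedDeriv j (gFun β k) ζ‖ ≤ C / (1 + ‖ζ‖) ^ j :=
  stmt7_general β k hk
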